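/- For every k, the (k+1)-st iterate of the step function on init_k equals the configuration (Q2, tape_k, k); that is, after moving right past all k ones, the machine M reads the 0 in cell k+1, switches to state Q2, and moves left to cell k, leaving the tape unchanged. -/

import Mathlib

/-- Configurations of the 3-state Turing machine: (state, tape, head position). -/
abbrev Config : Type := Fin 3 × (ℕ → Bool) × ℕ

/-- The total step function of the machine M. State 0 = Q1, 1 = Q2, 2 = Q3 (halt). -/
def step (c : Config) : Config :=
  match c with
  | (q, T, p) =>
    if q = 0 then (if T p then (0, T, p + 1) else (1, T, p - 1))
    else if q = 1 then
      (if T p then (1, Function.update T p false, p - 1) else (2, T, p + 1))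
    else (2, T, p)

/-- The input tape 0 1^k 0 0 ⋯ : cell i holds 1 iff 1 ≤ i ≤ k. -/
def tape (k : ℕ) : ℕ → Bool := fun i => decide (1 ≤ i ∧ i ≤ k)

/-- Initial configuration on input 0 1^k: state Q1, scanning cell 1. -/
def init (k : ℕ) : Config := (0, tape k, 1)

lemma step_zero_of_true {T : ℕ → Bool} {p : ℕ} (h : T p = true) :
    step (0, T, p) = (0, T, p + 1) := by
  simp [step, h]

lemma step_zero_of_false {T : ℕ → Bool} {p : ℕ} (h : T p = false) :
    step (0, T, p) = (1, T, p - 1) := by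
  simp [step, h]

lemma step_iterate_zero_of_ones {T : ℕ → Bool} {p : ℕ} (n : ℕ)
    (hones : ∀ i < n, T (p + i) = true) : step^[n] (0, T, p) = (0, T, p + n) := by
  induction n generalizing p with
  | zero => rfl
  | succ n ih =>
    have hnext : ∀ i < n, T (p + 1 + i) = true := fun i hi => by
      rw [Nat.add_assoc, Nat.add_comm 1]
      exact hones (i + 1) (by omega)
    rw [Function.iterate_succ_apply, step_zero_of_true (p := p) (hones 0 n.succ_pos), ih hnext,
      Nat.add_assoc, Nat.add_comm 1]

lemma tape_one_add_of_lt {k i : ℕ} (hi : i < k) : tape k (1 + i) = true := by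
  simp only [tape, decide_eq_true_eq]
  omega

lemma tape_one_add_self (k : ℕ) : tape k (1 + k) = false := by
  simp [tape]

/-- After k+1 steps, M has read the 0 in cell k+1, switched to state Q2,
and moved left to cell k, leaving the tape unchanged. -/
theorem turn_around (k : ℕ) :
    step^[k + 1] (init k) = (1, tape k, k) := by
  rw [Function.iterate_succ_apply', init,
    step_iterate_zero_of_ones k fun _ => tape_one_add_of_lt,
    step_zero_of_false (tape_one_add_self k)]
  simp
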